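/- arXiv:0712.0754 — 2 statements merged into one kernel-verified Lean document; each statement's English description precedes it below -/
import Mathlib

section
/- For a = -1, b = 2 and ε > 0, the two numbers ω_{ε,1} = π/2 - arcsin√(ε/(2+2ε)) and ω_{ε,2} = π/2 + arcsin√(ε/(2+2ε)) satisfy the characteristic equation cos(-ω) sin(2ω) = ε sin(-ω) cos(2ω), and both converge to π/2 as ε → 0⁺. -/
/-!
Since `sin 2ω = 2 sin ω cos ω` and `cos 2ω = 2 cos² ω - 1`, the characteristic equation
factors as `sin ω · ((2 + 2ε) cos² ω - ε) = 0`, so every `ω` with `cos² ω = ε / (2 + 2ε)` is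
a root. For `ω = π/2 ∓ θ` one has `cos² ω = sin² θ`, and `θ = arcsin √(ε / (2 + 2ε))` makes
this `ε / (2 + 2ε)`. The limits follow from continuity of `θ` in `ε` at `ε = 0`, where `θ = 0`.
-/

open Real Filter Topology

lemma char_eq_of_cos_sq_mul {ε ω : ℝ} (h : cos ω ^ 2 * (2 + 2 * ε) = ε) :
    cos (-ω) * sin (2 * ω) = ε * sin (-ω) * cos (2 * ω) := by
  rw [cos_neg, sin_neg, sin_two_mul, cos_two_mul]
  linear_combination sin ω * h

lemma div_two_add_two_mul_mem_Icc {ε : ℝ} (hε : 0 ≤ ε) : ε / (2 + 2 * ε) ∈ Set.Icc 0 1 :=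
  ⟨by positivity, (div_le_one (by positivity)).mpr (by linarith)⟩

lemma sin_arcsin_sqrt_sq {x : ℝ} (hx : x ∈ Set.Icc 0 1) : sin (arcsin √x) ^ 2 = x := by
  have hsqrt : √x ≤ 1 := Real.sqrt_le_one.mpr hx.2
  rw [sin_arcsin (by linarith [Real.sqrt_nonneg x]) hsqrt, sq_sqrt hx.1]

lemma tendsto_arcsin_sqrt_div_two_add_two_mul :
    Tendsto (fun ε : ℝ => arcsin √(ε / (2 + 2 * ε))) (𝓝 0) (𝓝 0) := by
  have hcont : ContinuousAt (fun ε : ℝ => arcsin √(ε / (2 + 2 * ε))) 0 :=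
    continuous_arcsin.continuousAt.comp <| continuous_sqrt.continuousAt.comp <|
      continuousAt_id.div (by fun_prop) (by norm_num)
  simpa using hcont.tendsto

/-- For `a = -1`, `b = 2`, the numbers `ω_{ε,1} = π/2 - arcsin √(ε/(2+2ε))` and
`ω_{ε,2} = π/2 + arcsin √(ε/(2+2ε))` satisfy the characteristic equation
`cos(-ω) sin(2ω) = ε sin(-ω) cos(2ω)`, and both converge to `π/2` as `ε → 0⁺`. -/
theorem stmt_2 :
    (∀ ε : ℝ, 0 < ε →
      ∀ ω : ℝ,
        (ω = Real.pi / 2 - Real.arcsin (Real.sqrt (ε / (2 + 2 * ε))) ∨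
         ω = Real.pi / 2 + Real.arcsin (Real.sqrt (ε / (2 + 2 * ε)))) →
        Real.cos (-ω) * Real.sin (2 * ω) = ε * Real.sin (-ω) * Real.cos (2 * ω)) ∧
    Tendsto (fun ε : ℝ => Real.pi / 2 - Real.arcsin (Real.sqrt (ε / (2 + 2 * ε))))
      (nhdsWithin 0 (Set.Ioi 0)) (nhds (Real.pi / 2)) ∧
    Tendsto (fun ε : ℝ => Real.pi / 2 + Real.arcsin (Real.sqrt (ε / (2 + 2 * ε))))
      (nhdsWithin 0 (Set.Ioi 0)) (nhds (Real.pi / 2)) := by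
  have hθ : Tendsto (fun ε : ℝ => arcsin √(ε / (2 + 2 * ε))) (𝓝[>] 0) (𝓝 0) :=
    tendsto_arcsin_sqrt_div_two_add_two_mul.mono_left nhdsWithin_le_nhds
  refine ⟨fun ε hε ω hω => char_eq_of_cos_sq_mul ?_, by simpa using hθ.const_sub (π / 2),
    by simpa using hθ.const_add (π / 2)⟩
  have hsin := sin_arcsin_sqrt_sq (div_two_add_two_mul_mem_Icc hε.le)
  have hcos : cos ω ^ 2 = ε / (2 + 2 * ε) := by
    rcases hω with rfl | rfl
    · rw [cos_pi_div_two_sub, hsin]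
    · rw [add_comm, cos_add_pi_div_two, neg_sq, hsin]
  rw [hcos, div_mul_cancel₀ _ (by positivity)]
end

section
/- Let A be a self-adjoint operator with discrete spectrum on a Hilbert space H, and (μ, u) a quasimode with accuracy σ. Suppose the interval [μ - d, μ + d] (d > 0) contains exactly one eigenvalue λ of A and λ is simple. Then there exists a normalized eigenfunction v of A with eigenvalue λ such that ‖u - v‖ ≤ 2σ/d. -/
/-!
Let `E` be the `lam`-eigenspace, `w` the orthogonal projection of `u` onto `E` and `r = u - w`.
Since the eigenvectors are complete, `r` lies in the closed span of the eigenspaces of the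
eigenvalues `z ≠ lam`, all of which satisfy `|z - μ| > d`; on that span `‖(A - μ) x‖ ≥ d ‖x‖`
because eigenspaces are orthogonal. As `A - μ` preserves `Eᗮ`, `‖(A - μ) r‖ ≤ ‖(A - μ) u‖ ≤ σ`,
hence `‖r‖ ≤ σ / d`. Normalizing `w` (or taking any unit vector of `E` if `w = 0`) moves it by
`1 - ‖w‖ ≤ ‖r‖`, so the resulting unit eigenvector `v` satisfies `‖u - v‖ ≤ 2 ‖r‖ ≤ 2σ / d`.
-/

open Module End

section Geometry

variable {H : Type*} [NormedAddCommGroup H] [InnerProductSpace ℝ H]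

theorem Submodule.exists_norm_eq_one_norm_sub_eq (K : Submodule ℝ H) (hK : K ≠ ⊥) {w : H}
    (hw : w ∈ K) (hw₁ : ‖w‖ ≤ 1) : ∃ v ∈ K, ‖v‖ = 1 ∧ ‖w - v‖ = 1 - ‖w‖ := by
  rcases eq_or_ne w 0 with rfl | hw₀
  · have : Nontrivial K := K.nontrivial_iff_ne_bot.2 hK
    obtain ⟨v, hv⟩ := exists_norm_eq K zero_le_one
    exact ⟨v, v.2, hv, by simpa using hv⟩
  · have hn : ‖w‖ ≠ 0 := norm_ne_zero_iff.2 hw₀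
    refine ⟨‖w‖⁻¹ • w, K.smul_mem _ hw, by simp [norm_smul, hn], ?_⟩
    have hinv : 1 ≤ ‖w‖⁻¹ := one_le_inv_iff₀.2 ⟨norm_pos_iff.2 hw₀, hw₁⟩
    rw [show w - ‖w‖⁻¹ • w = (1 - ‖w‖⁻¹) • w by rw [sub_smul, one_smul], norm_smul,
      Real.norm_eq_abs, abs_of_nonpos (sub_nonpos.2 hinv), neg_sub, sub_mul, inv_mul_cancel₀ hn, one_mul]

theorem Submodule.exists_norm_eq_one_norm_sub_le (K : Submodule ℝ H) [K.HasOrthogonalProjection]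
    (hK : K ≠ ⊥) {u : H} (hu : ‖u‖ = 1) :
    ∃ v ∈ K, ‖v‖ = 1 ∧ ‖u - v‖ ≤ 2 * ‖u - K.starProjection u‖ := by
  set w := K.starProjection u
  have hpyth : ‖w‖ * ‖w‖ + ‖u - w‖ * ‖u - w‖ = 1 := by
    rw [← norm_add_sq_eq_norm_sq_add_norm_sq_real
      (K.inner_right_of_mem_orthogonal (K.starProjection_apply_mem u)
        (K.sub_starProjection_mem_orthogonal u)), add_sub_cancel, hu, one_mul]
  have hw₁ : ‖w‖ ≤ 1 := by nlinarith [norm_nonneg w, norm_nonneg (u - w)]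
  obtain ⟨v, hvK, hv₁, hwv⟩ :=
    K.exists_norm_eq_one_norm_sub_eq hK (K.starProjection_apply_mem u) hw₁
  refine ⟨v, hvK, hv₁, ?_⟩
  -- `1 - ‖w‖ ≤ 1 - ‖w‖ ^ 2 = ‖u - w‖ ^ 2 ≤ ‖u - w‖`
  have : 1 - ‖w‖ ≤ ‖u - w‖ := by nlinarith [norm_nonneg w, norm_nonneg (u - w)]
  calc ‖u - v‖ ≤ ‖u - w‖ + ‖w - v‖ := norm_sub_le_norm_sub_add_norm_sub u w v
    _ ≤ 2 * ‖u - w‖ := by linarith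

end Geometry

section Spectral

variable {𝕜 H : Type*} [RCLike 𝕜] [NormedAddCommGroup H] [InnerProductSpace 𝕜 H]

theorem Submodule.orthogonal_le_topologicalClosure_of_dense_sup [CompleteSpace H]
    {E F : Submodule 𝕜 H} (hFE : F ≤ Eᗮ) (hdense : (E ⊔ F).topologicalClosure = ⊤) :
    Eᗮ ≤ F.topologicalClosure := by
  intro y hy
  have : CompleteSpace F.topologicalClosure :=
    F.isClosed_topologicalClosure.completeSpace_coe
  obtain ⟨k, hk, k', hk', rfl⟩ := exists_add_mem_mem_orthogonal (K := F.topologicalClosure) y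
  have hkE : k ∈ Eᗮ := F.topologicalClosure_minimal hFE E.isClosed_orthogonal hk
  have hk'E : k' ∈ Eᗮ := by simpa using Eᗮ.sub_mem hy hkE
  rw [orthogonal_closure] at hk'
  have hk'0 : k' ∈ (E ⊔ F)ᗮ := inf_orthogonal E F ▸ ⟨hk'E, hk'⟩
  rw [topologicalClosure_eq_top_iff.1 hdense, mem_bot] at hk'0
  simpa [hk'0] using hk

theorem ContinuousLinearMap.mem_spectrum_of_apply_eq_smul {A : H →L[𝕜] H} {z : 𝕜} {v : H}
    (hv : v ≠ 0) (h : A v = z • v) : z ∈ spectrum 𝕜 A := by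
  intro hunit
  have hinj := ((isUnit_iff _).1 (hunit.map toLinearMapRingHom)).injective
  exact hv (hinj (by simp [h]))

theorem ContinuousLinearMap.span_eigenvectors_le_sup_iSup_eigenspace {A : H →L[𝕜] H} {lam : 𝕜}
    {S : Set 𝕜} (hS : ∀ z ∈ spectrum 𝕜 A, z ≠ lam → z ∈ S) :
    Submodule.span 𝕜 {v : H | ∃ z : 𝕜, A v = z • v} ≤
      eigenspace (A : End 𝕜 H) lam ⊔ ⨆ z : S, eigenspace (A : End 𝕜 H) z := by
  rw [Submodule.span_le]
  rintro v ⟨z, hv⟩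
  rcases eq_or_ne v 0 with rfl | hv₀
  · exact zero_mem _
  rcases eq_or_ne z lam with rfl | hz
  · exact Submodule.mem_sup_left (mem_eigenspace_iff.2 hv)
  · exact Submodule.mem_sup_right (Submodule.mem_iSup_of_mem ⟨z, hS z
      (mem_spectrum_of_apply_eq_smul hv₀ hv) hz⟩ (mem_eigenspace_iff.2 hv))

namespace LinearMap.IsSymmetric

theorem mul_norm_le_norm_sub_smul_of_mem_iSup_eigenspace {T : H →ₗ[𝕜] H} (hT : T.IsSymmetric)
    {μ : 𝕜} {d : ℝ} {S : Set 𝕜} (hS : ∀ z ∈ S, d ≤ ‖z - μ‖) (hd : 0 ≤ d) {x : H}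
    (hx : x ∈ ⨆ z : S, eigenspace T z) : d * ‖x‖ ≤ ‖T x - μ • x‖ := by
  obtain ⟨s, hs⟩ := Submodule.mem_iSup_iff_exists_finset.1 hx
  obtain ⟨g, rfl⟩ := (Submodule.mem_iSup_finset_iff_exists_sum _ _).1 hs
  have hV := hT.orthogonalFamily_eigenspaces.comp (Subtype.val_injective (p := (· ∈ S)))
  have hTg : T (∑ z ∈ s, (g z : H)) - μ • ∑ z ∈ s, (g z : H) =
      ∑ z ∈ s, ((z : 𝕜) - μ) • (g z : H) := by
    simp [Finset.smul_sum, ← Finset.sum_sub_distrib, sub_smul, mem_eigenspace_iff.1 (g _).2]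
  have hx2 : ‖∑ z ∈ s, (g z : H)‖ ^ 2 = ∑ z ∈ s, ‖g z‖ ^ 2 := hV.norm_sum g s
  have hTx2 : ‖∑ z ∈ s, ((z : 𝕜) - μ) • (g z : H)‖ ^ 2 = ∑ z ∈ s, ‖((z : 𝕜) - μ) • g z‖ ^ 2 :=
    hV.norm_sum (fun z => ((z : 𝕜) - μ) • g z) s
  refine le_of_sq_le_sq ?_ (norm_nonneg _)
  rw [hTg, mul_pow, hx2, hTx2, Finset.mul_sum]
  gcongr with z
  rw [norm_smul, mul_pow]
  gcongr
  exact hS z z.2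

theorem norm_sub_smul_le_of_mem_orthogonal_eigenspace {T : H →ₗ[𝕜] H} (hT : T.IsSymmetric)
    {lam : 𝕜} (μ : 𝕜) {w r : H} (hw : w ∈ eigenspace T lam) (hr : r ∈ (eigenspace T lam)ᗮ) :
    ‖T r - μ • r‖ ≤ ‖T (w + r) - μ • (w + r)‖ := by
  have hTr : T r - μ • r ∈ (eigenspace T lam)ᗮ :=
    sub_mem (hT.invariant_orthogonalComplement_eigenspace lam r hr) (Submodule.smul_mem _ μ hr)
  have hsplit : T (w + r) - μ • (w + r) = (lam - μ) • w + (T r - μ • r) := by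
    rw [map_add, mem_eigenspace_iff.1 hw, smul_add, sub_smul]
    abel
  have hpyth := norm_add_sq_eq_norm_sq_add_norm_sq_of_inner_eq_zero _ _
    (Submodule.inner_right_of_mem_orthogonal (Submodule.smul_mem _ (lam - μ) hw) hTr)
  rw [hsplit, mul_self_le_mul_self_iff (norm_nonneg _) (norm_nonneg _), hpyth]
  exact le_add_of_nonneg_left (mul_self_nonneg _)

end LinearMap.IsSymmetric

theorem ContinuousLinearMap.mul_norm_le_norm_sub_smul_of_mem_closure_iSup_eigenspace
    {T : H →L[𝕜] H} (hT : (T : H →ₗ[𝕜] H).IsSymmetric) {μ : 𝕜} {d : ℝ} {S : Set 𝕜}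
    (hS : ∀ z ∈ S, d ≤ ‖z - μ‖) (hd : 0 ≤ d) {x : H}
    (hx : x ∈ (⨆ z : S, eigenspace (T : End 𝕜 H) z).topologicalClosure) :
    d * ‖x‖ ≤ ‖T x - μ • x‖ :=
  closure_minimal (fun _ hy => hT.mul_norm_le_norm_sub_smul_of_mem_iSup_eigenspace hS hd hy)
    (isClosed_le (f := fun y => d * ‖y‖) (g := fun y => ‖T y - μ • y‖) (by fun_prop)
      (by fun_prop)) hx

end Spectral

theorem stmt_13_general {H : Type*} [NormedAddCommGroup H] [InnerProductSpace ℝ H]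
    [CompleteSpace H]
    (A : H →L[ℝ] H) (hA : IsSelfAdjoint A)
    (hcomplete : (Submodule.span ℝ {v : H | ∃ z : ℝ, A v = z • v}).topologicalClosure = ⊤)
    (μ σ d : ℝ) (hd : 0 < d)
    (u : H) (hu : ‖u‖ = 1) (hq : ‖A u - μ • u‖ ≤ σ)
    (lam : ℝ) (hlameig : ∃ v : H, v ≠ 0 ∧ A v = lam • v)
    (hunique : ∀ z ∈ spectrum ℝ A, |z - μ| ≤ d → z = lam)
    (hin : |lam - μ| ≤ d) :
    ∃ v : H, ‖v‖ = 1 ∧ A v = lam • v ∧ ‖u - v‖ ≤ 2 * σ / d := by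
  set E := eigenspace (A : End ℝ H) lam
  set F := ⨆ z : {z : ℝ | d < |z - μ|}, eigenspace (A : End ℝ H) z
  have hFE : F ≤ Eᗮ := iSup_le fun z => Submodule.isOrtho_iff_le.1 <|
    hA.isSymmetric.orthogonalFamily_eigenspaces.isOrtho fun h =>
      (h ▸ z.2 : d < |lam - μ|).not_ge hin
  have hdense : (E ⊔ F).topologicalClosure = ⊤ := top_unique <| hcomplete.symm.le.trans <|
    Submodule.topologicalClosure_mono <| A.span_eigenvectors_le_sup_iSup_eigenspace fun z hz hne =>
      lt_of_not_ge fun h => hne (hunique z hz h)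
  set r := u - E.starProjection u
  have hrF : r ∈ F.topologicalClosure :=
    E.orthogonal_le_topologicalClosure_of_dense_sup hFE hdense
      (E.sub_starProjection_mem_orthogonal u)
  have hres : ‖A r - μ • r‖ ≤ σ := by
    refine le_trans ?_ hq
    simpa [r] using hA.isSymmetric.norm_sub_smul_le_of_mem_orthogonal_eigenspace μ
      (E.starProjection_apply_mem u) (E.sub_starProjection_mem_orthogonal u)
  have hdr : d * ‖r‖ ≤ σ := (A.mul_norm_le_norm_sub_smul_of_mem_closure_iSup_eigenspace
    hA.isSymmetric (fun z hz => hz.le) hd.le hrF).trans hres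
  have hE : E ≠ ⊥ := by
    obtain ⟨v, hv₀, hv⟩ := hlameig
    exact (Submodule.ne_bot_iff E).2 ⟨v, mem_eigenspace_iff.2 hv, hv₀⟩
  obtain ⟨v, hvE, hv₁, huv⟩ := E.exists_norm_eq_one_norm_sub_le hE hu
  refine ⟨v, hv₁, mem_eigenspace_iff.1 hvE, huv.trans ?_⟩
  rw [mul_div_assoc]
  gcongr
  rwa [le_div_iff₀ hd, mul_comm]

/-- Vishik–Lyusternik lemma, part 2: if `(μ, u)` is a quasimode of a
self-adjoint operator `A` with discrete spectrum (eigenvectors are complete and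
every spectral point is an eigenvalue), and `[μ - d, μ + d]` contains exactly
one eigenvalue `lam` of `A`, which is simple, then there is a normalized
eigenvector `v` with `‖u - v‖ ≤ 2σ/d`. -/
theorem stmt_13 {H : Type*} [NormedAddCommGroup H] [InnerProductSpace ℝ H]
    [CompleteSpace H] [Nontrivial H]
    (A : H →L[ℝ] H) (hA : IsSelfAdjoint A)
    (hdisc : ∀ z ∈ spectrum ℝ A, ∃ v : H, v ≠ 0 ∧ A v = z • v)
    (hcomplete : (Submodule.span ℝ {v : H | ∃ z : ℝ, A v = z • v}).topologicalClosure = ⊤)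
    (μ σ d : ℝ) (hσ : 0 < σ) (hd : 0 < d)
    (u : H) (hu : ‖u‖ = 1) (hq : ‖A u - μ • u‖ ≤ σ)
    (lam : ℝ) (hlameig : ∃ v : H, v ≠ 0 ∧ A v = lam • v)
    (hunique : ∀ z ∈ spectrum ℝ A, |z - μ| ≤ d → z = lam)
    (hin : |lam - μ| ≤ d)
    (hsimple : ∀ v w : H, v ≠ 0 → A v = lam • v → A w = lam • w → ∃ c : ℝ, w = c • v) :
    ∃ v : H, ‖v‖ = 1 ∧ A v = lam • v ∧ ‖u - v‖ ≤ 2 * σ / d :=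
  stmt_13_general A hA hcomplete μ σ d hd u hu hq lam hlameig hunique hin
end
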